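/- arXiv:2306.06394 — 2 statements merged into one kernel-verified Lean document; each statement's English description precedes it below -/
import Mathlib

section
/- Assume (i) the performance-difference bound |J(π*) − J(π_θ)| ≤ (2 R_max / ((1−γ)(1−γ^c))) · E_{s∼d, g∼ν}[D_TV(π*(·|s,g), π_θ(·|s,g))] holds; (ii) d is absolutely continuous with respect to κ and its Radon–Nikodym derivative dd/dκ is κ-essentially bounded by a constant C ≥ 0; (iii) π* is φ-common in Π, i.e. E_{s∼κ, i∼Π, g∼ν}[D_TV(π*(·|s,g), π_{D,i}(·|s,g))] ≤ φ; and (iv) the map (s,g) ↦ D_TV(π*(·|s,g), π_θ(·|s,g)) and the maps (s,i,g) ↦ D_TV(π*(·|s,g), π_{D,i}(·|s,g)) and (s,i,g) ↦ D_TV(π_{D,i}(·|s,g), π_θ(·|s,g)) are measurable. Then, setting λ_H = (2 R_max / ((1−γ)(1−γ^c))) · C, one has |J(π*) − J(π_θ)| ≤ λ_H · φ + λ_H · E_{s∼κ, i∼Π, g∼ν}[D_TV(π_{D,i}(·|s,g), π_θ(·|s,g))]. -/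
/-!
Bound the `d`-average of `D_TV(π*, π_θ)` by `C` times its `κ`-average, since `d ≤ C • κ`.
Averaging over the dummy index `i ∼ Π` changes nothing, and for each `i` the triangle
inequality through `π_{D,i}` splits the `κ`-average into the `φ`-commonness term and the
`D_TV(π_{D,i}, π_θ)` term.
-/

open MeasureTheory
open scoped ENNReal

/-- Total variation distance between two measures:
`D_TV(P,Q) = sup over measurable sets A of |P(A) − Q(A)|`. -/
noncomputable def tvDist {T : Type*} [MeasurableSpace T] (P Q : Measure T) : ℝ :=
  ⨆ A : {A : Set T // MeasurableSet A}, |(P A.1).toReal - (Q A.1).toReal|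

section TotalVariation

variable {T : Type*} [MeasurableSpace T]

lemma tvDist_bddAbove (P Q : Measure T) [IsFiniteMeasure P] [IsFiniteMeasure Q] :
    BddAbove (Set.range fun A : {A : Set T // MeasurableSet A} =>
      |(P A.1).toReal - (Q A.1).toReal|) := by
  refine ⟨P.real Set.univ + Q.real Set.univ, ?_⟩
  rintro _ ⟨A, rfl⟩
  calc |(P A.1).toReal - (Q A.1).toReal| ≤ |P.real A.1| + |Q.real A.1| := abs_sub _ _
    _ = P.real A.1 + Q.real A.1 := by
        rw [abs_of_nonneg measureReal_nonneg, abs_of_nonneg measureReal_nonneg]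
    _ ≤ P.real Set.univ + Q.real Set.univ :=
        add_le_add (measureReal_mono (Set.subset_univ _)) (measureReal_mono (Set.subset_univ _))

lemma tvDist_nonneg (P Q : Measure T) [IsFiniteMeasure P] [IsFiniteMeasure Q] :
    0 ≤ tvDist P Q :=
  (abs_nonneg _).trans (le_ciSup (tvDist_bddAbove P Q) ⟨∅, MeasurableSet.empty⟩)

lemma tvDist_le_one (P Q : Measure T) [IsProbabilityMeasure P] [IsProbabilityMeasure Q] :
    tvDist P Q ≤ 1 :=
  ciSup_le fun _ => abs_sub_le_of_nonneg_of_le measureReal_nonneg measureReal_le_one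
    measureReal_nonneg measureReal_le_one

lemma tvDist_triangle (P Q R : Measure T)
    [IsFiniteMeasure P] [IsFiniteMeasure Q] [IsFiniteMeasure R] :
    tvDist P R ≤ tvDist P Q + tvDist Q R :=
  ciSup_le fun A => (abs_sub_le _ _ _).trans <|
    add_le_add (le_ciSup (tvDist_bddAbove P Q) A) (le_ciSup (tvDist_bddAbove Q R) A)

lemma integrable_tvDist {α : Type*} [MeasurableSpace α] {μ : Measure α} [IsFiniteMeasure μ]
    {P Q : α → Measure T} (hP : ∀ x, IsProbabilityMeasure (P x))
    (hQ : ∀ x, IsProbabilityMeasure (Q x)) (hm : Measurable fun x => tvDist (P x) (Q x)) :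
    Integrable (fun x => tvDist (P x) (Q x)) μ :=
  .of_bound hm.aestronglyMeasurable 1 <| ae_of_all _ fun x => by
    rw [Real.norm_of_nonneg (tvDist_nonneg _ _)]
    exact tvDist_le_one _ _

end TotalVariation

section Measures

variable {α β γ : Type*} [MeasurableSpace α] [MeasurableSpace β] [MeasurableSpace γ]

lemma MeasureTheory.Measure.le_smul_of_rnDeriv_le {μ ν : Measure α} [μ.HaveLebesgueDecomposition ν]
    (hac : μ ≪ ν) {c : ℝ≥0∞} (h : ∀ᵐ x ∂ν, μ.rnDeriv ν x ≤ c) : μ ≤ c • ν :=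
  calc μ = ν.withDensity (μ.rnDeriv ν) := (Measure.withDensity_rnDeriv_eq μ ν hac).symm
    _ ≤ ν.withDensity fun _ => c := withDensity_mono h
    _ = c • ν := withDensity_const c

lemma integral_le_mul_integral_of_le_smul {μ ν : Measure α} {C : ℝ} (hC : 0 ≤ C)
    (hμν : μ ≤ ENNReal.ofReal C • ν) {f : α → ℝ} (hf : 0 ≤ᵐ[ν] f) (hfi : Integrable f ν) :
    ∫ x, f x ∂μ ≤ C * ∫ x, f x ∂ν :=
  calc ∫ x, f x ∂μ ≤ ∫ x, f x ∂(ENNReal.ofReal C • ν) :=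
        integral_mono_measure hμν (Measure.ae_smul_measure hf _)
          (hfi.smul_measure ENNReal.ofReal_ne_top)
    _ = C * ∫ x, f x ∂ν := by
        rw [integral_smul_measure, ENNReal.toReal_ofReal hC, smul_eq_mul]

lemma integral_prod_prod_comp_fst_snd_snd {μ : Measure α} {ρ : Measure β} {ν : Measure γ}
    [SFinite μ] [IsProbabilityMeasure ρ] [SFinite ν] {f : α × γ → ℝ}
    (hf : AEStronglyMeasurable f (μ.prod ν)) :
    ∫ p, f (p.1, p.2.2) ∂(μ.prod (ρ.prod ν)) = ∫ p, f p ∂(μ.prod ν) := by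
  have hmap : (μ.prod (ρ.prod ν)).map (Prod.map id Prod.snd) = μ.prod ν := by
    rw [← Measure.map_prod_map _ _ measurable_id measurable_snd, Measure.map_id,
      Measure.map_snd_prod, measure_univ, one_smul]
  rw [← hmap] at hf ⊢
  exact (integral_map (measurable_id.prodMap measurable_snd).aemeasurable hf).symm

end Measures

theorem higher_level_suboptimality_bound_general
    {S T G I : Type*} [MeasurableSpace S] [MeasurableSpace T] [MeasurableSpace G]
    [MeasurableSpace I]
    (κ d : Measure S) (ν : Measure G) (μI : Measure I)
    [IsProbabilityMeasure κ] [IsProbabilityMeasure d] [IsProbabilityMeasure ν]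
    [IsProbabilityMeasure μI]
    (πD : I → S → G → Measure T) (πStar πθ : S → G → Measure T)
    (hπD : ∀ i s g, IsProbabilityMeasure (πD i s g))
    (hπStar : ∀ s g, IsProbabilityMeasure (πStar s g))
    (hπθ : ∀ s g, IsProbabilityMeasure (πθ s g))
    (J : (S → G → Measure T) → ℝ)
    (Rmax γ φ C : ℝ) (c : ℕ)
    (hR : 0 ≤ Rmax) (hγ0 : 0 < γ) (hγ1 : γ < 1)
    (hC : 0 ≤ C)
    -- (i) performance-difference bound
    (hperf : |J πStar - J πθ| ≤ (2 * Rmax / ((1 - γ) * (1 - γ ^ c))) *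
      ∫ p : S × G, tvDist (πStar p.1 p.2) (πθ p.1 p.2) ∂(d.prod ν))
    -- (ii) absolute continuity of `d` w.r.t. `κ` with κ-essentially bounded density
    (hac : d ≪ κ)
    (hbound : ∀ᵐ s ∂κ, d.rnDeriv κ s ≤ ENNReal.ofReal C)
    -- (iii) `π*` is `φ`-common in `Π`
    (hcommon : ∫ p : S × I × G,
        tvDist (πStar p.1 p.2.2) (πD p.2.1 p.1 p.2.2) ∂(κ.prod (μI.prod ν)) ≤ φ)
    -- (iv) measurability of the total-variation maps
    (hm1 : Measurable fun p : S × G => tvDist (πStar p.1 p.2) (πθ p.1 p.2))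
    (hm2 : Measurable fun p : S × I × G => tvDist (πStar p.1 p.2.2) (πD p.2.1 p.1 p.2.2))
    (hm3 : Measurable fun p : S × I × G => tvDist (πD p.2.1 p.1 p.2.2) (πθ p.1 p.2.2)) :
    |J πStar - J πθ| ≤ (2 * Rmax / ((1 - γ) * (1 - γ ^ c))) * C * φ +
      (2 * Rmax / ((1 - γ) * (1 - γ ^ c))) * C *
        ∫ p : S × I × G,
          tvDist (πD p.2.1 p.1 p.2.2) (πθ p.1 p.2.2) ∂(κ.prod (μI.prod ν)) := by
  set K := 2 * Rmax / ((1 - γ) * (1 - γ ^ c))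
  have hK : 0 ≤ K := div_nonneg (by linarith) <|
    mul_nonneg (sub_nonneg.2 hγ1.le) (sub_nonneg.2 (pow_le_one₀ hγ0.le hγ1.le))
  have hdκ : d.prod ν ≤ ENNReal.ofReal C • κ.prod ν := by
    rw [← Measure.prod_smul_left]
    exact Measure.prod_mono (Measure.le_smul_of_rnDeriv_le hac hbound) le_rfl
  have hchange := integral_le_mul_integral_of_le_smul hC hdκ
    (ae_of_all _ fun p => tvDist_nonneg _ _)
    (integrable_tvDist (fun p => hπStar p.1 p.2) (fun p => hπθ p.1 p.2) hm1)
  have hsplit : ∫ p : S × G, tvDist (πStar p.1 p.2) (πθ p.1 p.2) ∂(κ.prod ν) ≤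
      φ + ∫ p : S × I × G, tvDist (πD p.2.1 p.1 p.2.2) (πθ p.1 p.2.2) ∂(κ.prod (μI.prod ν)) := by
    have h2 := integrable_tvDist (μ := κ.prod (μI.prod ν)) (fun p => hπStar p.1 p.2.2)
      (fun p => hπD p.2.1 p.1 p.2.2) hm2
    have h3 := integrable_tvDist (μ := κ.prod (μI.prod ν)) (fun p => hπD p.2.1 p.1 p.2.2)
      (fun p => hπθ p.1 p.2.2) hm3
    rw [← integral_prod_prod_comp_fst_snd_snd (ρ := μI) hm1.aestronglyMeasurable]
    refine (integral_mono_of_nonneg (ae_of_all _ fun p => tvDist_nonneg _ _) (h2.add h3)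
      (ae_of_all _ fun p => tvDist_triangle _ _ _)).trans ?_
    rw [integral_add' h2 h3]
    linarith
  calc |J πStar - J πθ| ≤ K * (C * (φ + ∫ p : S × I × G,
          tvDist (πD p.2.1 p.1 p.2.2) (πθ p.1 p.2.2) ∂(κ.prod (μI.prod ν)))) :=
        hperf.trans <| mul_le_mul_of_nonneg_left (hchange.trans (mul_le_mul_of_nonneg_left hsplit hC)) hK
    _ = _ := by ring

/-- Higher-level suboptimality bound:
`|J(π*) − J(π_θ)| ≤ λ_H·φ + λ_H·E_{s∼κ, i∼Π, g∼ν}[D_TV(π_{D,i}(·|s,g), π_θ(·|s,g))]`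
with `λ_H = (2 R_max / ((1−γ)(1−γ^c))) · C`. -/
theorem higher_level_suboptimality_bound
    {S T G I : Type*} [MeasurableSpace S] [MeasurableSpace T] [MeasurableSpace G]
    [MeasurableSpace I]
    (κ d : Measure S) (ν : Measure G) (μI : Measure I)
    [IsProbabilityMeasure κ] [IsProbabilityMeasure d] [IsProbabilityMeasure ν]
    [IsProbabilityMeasure μI]
    (πD : I → S → G → Measure T) (πStar πθ : S → G → Measure T)
    (hπD : ∀ i s g, IsProbabilityMeasure (πD i s g))
    (hπStar : ∀ s g, IsProbabilityMeasure (πStar s g))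
    (hπθ : ∀ s g, IsProbabilityMeasure (πθ s g))
    (J : (S → G → Measure T) → ℝ)
    (Rmax γ φ C : ℝ) (c : ℕ)
    (hR : 0 ≤ Rmax) (hγ0 : 0 < γ) (hγ1 : γ < 1) (hc : 1 ≤ c)
    (hφ : 0 ≤ φ) (hC : 0 ≤ C)
    -- (i) performance-difference bound
    (hperf : |J πStar - J πθ| ≤ (2 * Rmax / ((1 - γ) * (1 - γ ^ c))) *
      ∫ p : S × G, tvDist (πStar p.1 p.2) (πθ p.1 p.2) ∂(d.prod ν))
    -- (ii) absolute continuity of `d` w.r.t. `κ` with κ-essentially bounded density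
    (hac : d ≪ κ)
    (hbound : ∀ᵐ s ∂κ, d.rnDeriv κ s ≤ ENNReal.ofReal C)
    -- (iii) `π*` is `φ`-common in `Π`
    (hcommon : ∫ p : S × I × G,
        tvDist (πStar p.1 p.2.2) (πD p.2.1 p.1 p.2.2) ∂(κ.prod (μI.prod ν)) ≤ φ)
    -- (iv) measurability of the total-variation maps
    (hm1 : Measurable fun p : S × G => tvDist (πStar p.1 p.2) (πθ p.1 p.2))
    (hm2 : Measurable fun p : S × I × G => tvDist (πStar p.1 p.2.2) (πD p.2.1 p.1 p.2.2))
    (hm3 : Measurable fun p : S × I × G => tvDist (πD p.2.1 p.1 p.2.2) (πθ p.1 p.2.2)) :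
    |J πStar - J πθ| ≤ (2 * Rmax / ((1 - γ) * (1 - γ ^ c))) * C * φ +
      (2 * Rmax / ((1 - γ) * (1 - γ ^ c))) * C *
        ∫ p : S × I × G,
          tvDist (πD p.2.1 p.1 p.2.2) (πθ p.1 p.2.2) ∂(κ.prod (μI.prod ν)) :=
  higher_level_suboptimality_bound_general κ d ν μI πD πStar πθ hπD hπStar hπθ J Rmax γ φ C c hR hγ0
    hγ1 hC hperf hac hbound hcommon hm1 hm2 hm3
end

section
/- Under the hypotheses of the higher-level suboptimality bound — namely (i) |J(π*) − J(π_θ)| ≤ (2 R_max / ((1−γ)(1−γ^c))) · E_{s∼d, g∼ν}[D_TV(π*(·|s,g), π_θ(·|s,g))], (ii) d ≪ κ with κ-essentially bounded density C, (iii) π* is φ-common in Π, and (iv) the relevant total-variation maps are measurable — one has, with λ_H = (2 R_max / ((1−γ)(1−γ^c))) · C, the minorization J(π*) ≥ J(π_θ) − λ_H · φ − λ_H · E_{s∼κ, i∼Π, g∼ν}[D_TV(π_{D,i}(·|s,g), π_θ(·|s,g))]. -/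
/-!
Let `λ = 2 R_max / ((1 - γ)(1 - γ^c))`. The performance bound controls `J(π_θ) - J(π*)` by
`λ · E_{d × ν}[D_TV(π*, π_θ)]`. A density bounded by `C` gives `d ≤ C • κ`, so this expectation
is at most `C · E_{κ × ν}[D_TV(π*, π_θ)]`. Averaging also over the dataset index `i ∼ Π` and
inserting `π_{D,i}` by the triangle inequality for `D_TV` bounds it by
`C · (φ + E[D_TV(π_{D,i}, π_θ)])`.
-/

open MeasureTheory

namespace MeasureTheory

section TotalVariation

variable {T : Type*} [MeasurableSpace T]

lemma tvDist_nonneg (P Q : Measure T) : 0 ≤ tvDist P Q :=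
  Real.iSup_nonneg fun _ => abs_nonneg _

lemma abs_toReal_sub_le_one (P Q : Measure T) [IsProbabilityMeasure P] [IsProbabilityMeasure Q]
    (A : Set T) : |(P A).toReal - (Q A).toReal| ≤ 1 :=
  abs_sub_le_of_nonneg_of_le ENNReal.toReal_nonneg measureReal_le_one
    ENNReal.toReal_nonneg measureReal_le_one

lemma tvDist_le_one (P Q : Measure T) [IsProbabilityMeasure P] [IsProbabilityMeasure Q] :
    tvDist P Q ≤ 1 :=
  Real.iSup_le (fun A => abs_toReal_sub_le_one P Q A.1) zero_le_one

lemma bddAbove_range_abs_toReal_sub (P Q : Measure T) [IsProbabilityMeasure P]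
    [IsProbabilityMeasure Q] :
    BddAbove (Set.range fun A : {A : Set T // MeasurableSet A} =>
      |(P A.1).toReal - (Q A.1).toReal|) :=
  ⟨1, by rintro _ ⟨A, rfl⟩; exact abs_toReal_sub_le_one P Q A.1⟩

lemma tvDist_triangle (P Q R : Measure T) [IsProbabilityMeasure P] [IsProbabilityMeasure Q]
    [IsProbabilityMeasure R] : tvDist P R ≤ tvDist P Q + tvDist Q R :=
  Real.iSup_le (fun A => (abs_sub_le _ _ _).trans (add_le_add
    (le_ciSup (bddAbove_range_abs_toReal_sub P Q) A)
    (le_ciSup (bddAbove_range_abs_toReal_sub Q R) A)))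
    (add_nonneg (tvDist_nonneg P Q) (tvDist_nonneg Q R))

variable {α : Type*} [MeasurableSpace α] {μ : Measure α} {P Q R : α → Measure T}

lemma integrable_tvDist [IsFiniteMeasure μ] [∀ a, IsProbabilityMeasure (P a)]
    [∀ a, IsProbabilityMeasure (Q a)] (hm : Measurable fun a => tvDist (P a) (Q a)) :
    Integrable (fun a => tvDist (P a) (Q a)) μ :=
  .of_bound hm.aestronglyMeasurable 1 <| ae_of_all _ fun a => by
    rw [Real.norm_of_nonneg (tvDist_nonneg _ _)]
    exact tvDist_le_one _ _

lemma integral_tvDist_le_add [IsFiniteMeasure μ] [∀ a, IsProbabilityMeasure (P a)]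
    [∀ a, IsProbabilityMeasure (Q a)] [∀ a, IsProbabilityMeasure (R a)]
    (hPR : Measurable fun a => tvDist (P a) (R a)) (hPQ : Measurable fun a => tvDist (P a) (Q a))
    (hQR : Measurable fun a => tvDist (Q a) (R a)) :
    ∫ a, tvDist (P a) (R a) ∂μ ≤ ∫ a, tvDist (P a) (Q a) ∂μ + ∫ a, tvDist (Q a) (R a) ∂μ := by
  rw [← integral_add (integrable_tvDist hPQ) (integrable_tvDist hQR)]
  exact integral_mono (integrable_tvDist hPR) ((integrable_tvDist hPQ).add (integrable_tvDist hQR))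
    fun a => tvDist_triangle _ _ _

end TotalVariation

section ChangeOfMeasure

variable {α : Type*} [MeasurableSpace α]

lemma Measure.le_smul_of_rnDeriv_le_s2 {μ ν : Measure α} [μ.HaveLebesgueDecomposition ν]
    (hμν : μ ≪ ν) {c : ENNReal} (h : ∀ᵐ x ∂ν, μ.rnDeriv ν x ≤ c) : μ ≤ c • ν := by
  rw [← Measure.withDensity_rnDeriv_eq μ ν hμν, ← withDensity_const]
  exact withDensity_mono h

lemma integral_le_mul_integral_of_le_smul {μ ν : Measure α} {C : ℝ} (hC : 0 ≤ C)
    (hμν : μ ≤ ENNReal.ofReal C • ν) {f : α → ℝ} (hf : 0 ≤ f) (hfi : Integrable f ν) :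
    ∫ x, f x ∂μ ≤ C * ∫ x, f x ∂ν := by
  calc ∫ x, f x ∂μ ≤ ∫ x, f x ∂(ENNReal.ofReal C • ν) :=
        integral_mono_measure hμν (ae_of_all _ hf) (hfi.smul_measure ENNReal.ofReal_ne_top)
    _ = C * ∫ x, f x ∂ν := by rw [integral_smul_measure, ENNReal.toReal_ofReal hC, smul_eq_mul]

lemma integral_comp_prodMap_id_snd {β γ : Type*} [MeasurableSpace β] [MeasurableSpace γ]
    (μ : Measure α) (ρ : Measure β) (ν : Measure γ) [SFinite μ] [IsProbabilityMeasure ρ]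
    [SFinite ν] {f : α × γ → ℝ} (hf : AEStronglyMeasurable f (μ.prod ν)) :
    ∫ p : α × β × γ, f (p.1, p.2.2) ∂(μ.prod (ρ.prod ν)) = ∫ q, f q ∂(μ.prod ν) := by
  have hmp := (MeasurePreserving.id μ).prod (measurePreserving_snd (μ := ρ) (ν := ν))
  rw [← hmp.map_eq, integral_map hmp.measurable.aemeasurable (hmp.map_eq ▸ hf)]
  rfl

end ChangeOfMeasure

lemma integral_tvDist_le_of_rnDeriv_le {S I G T : Type*} [MeasurableSpace S] [MeasurableSpace I]
    [MeasurableSpace G] [MeasurableSpace T] {κ d : Measure S} (ν : Measure G) (μI : Measure I)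
    [IsFiniteMeasure κ] [SigmaFinite d] [IsFiniteMeasure ν] [IsProbabilityMeasure μI]
    {P Q : S → G → Measure T} {R : I → S → G → Measure T}
    [∀ s g, IsProbabilityMeasure (P s g)] [∀ s g, IsProbabilityMeasure (Q s g)]
    [∀ i s g, IsProbabilityMeasure (R i s g)] {C : ℝ} (hC : 0 ≤ C)
    (hac : d ≪ κ) (hbound : ∀ᵐ s ∂κ, d.rnDeriv κ s ≤ ENNReal.ofReal C)
    (hPQ : Measurable fun p : S × G => tvDist (P p.1 p.2) (Q p.1 p.2))
    (hPR : Measurable fun p : S × I × G => tvDist (P p.1 p.2.2) (R p.2.1 p.1 p.2.2))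
    (hRQ : Measurable fun p : S × I × G => tvDist (R p.2.1 p.1 p.2.2) (Q p.1 p.2.2)) :
    ∫ p : S × G, tvDist (P p.1 p.2) (Q p.1 p.2) ∂(d.prod ν) ≤
      C * (∫ p : S × I × G, tvDist (P p.1 p.2.2) (R p.2.1 p.1 p.2.2) ∂(κ.prod (μI.prod ν)) +
        ∫ p : S × I × G, tvDist (R p.2.1 p.1 p.2.2) (Q p.1 p.2.2) ∂(κ.prod (μI.prod ν))) := by
  have hdκ : d.prod ν ≤ ENNReal.ofReal C • κ.prod ν := by
    rw [← Measure.prod_smul_left]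
    exact Measure.prod_mono (Measure.le_smul_of_rnDeriv_le_s2 hac hbound) le_rfl
  have hPQ' : Measurable fun p : S × I × G => tvDist (P p.1 p.2.2) (Q p.1 p.2.2) :=
    hPQ.comp (f := fun p : S × I × G => (p.1, p.2.2)) (by fun_prop)
  calc _ ≤ C * ∫ p : S × G, tvDist (P p.1 p.2) (Q p.1 p.2) ∂(κ.prod ν) :=
        integral_le_mul_integral_of_le_smul hC hdκ (fun _ => tvDist_nonneg _ _)
          (integrable_tvDist hPQ)
    _ = C * ∫ p : S × I × G, tvDist (P p.1 p.2.2) (Q p.1 p.2.2) ∂(κ.prod (μI.prod ν)) := by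
        rw [integral_comp_prodMap_id_snd κ μI ν
          (f := fun q => tvDist (P q.1 q.2) (Q q.1 q.2)) hPQ.aestronglyMeasurable]
    _ ≤ _ := by
        gcongr
        exact integral_tvDist_le_add hPQ' hPR hRQ


end MeasureTheory

theorem higher_level_minorization_general
    {S T G I : Type*} [MeasurableSpace S] [MeasurableSpace T] [MeasurableSpace G]
    [MeasurableSpace I]
    (κ d : Measure S) (ν : Measure G) (μI : Measure I)
    [IsProbabilityMeasure κ] [IsProbabilityMeasure d] [IsProbabilityMeasure ν]
    [IsProbabilityMeasure μI]
    (πD : I → S → G → Measure T) (πStar πθ : S → G → Measure T)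
    (hπD : ∀ i s g, IsProbabilityMeasure (πD i s g))
    (hπStar : ∀ s g, IsProbabilityMeasure (πStar s g))
    (hπθ : ∀ s g, IsProbabilityMeasure (πθ s g))
    (J : (S → G → Measure T) → ℝ)
    (Rmax γ φ C : ℝ) (c : ℕ)
    (hR : 0 ≤ Rmax) (hγ0 : 0 < γ) (hγ1 : γ < 1)
    (hC : 0 ≤ C)
    -- (i) performance-difference bound
    (hperf : |J πStar - J πθ| ≤ (2 * Rmax / ((1 - γ) * (1 - γ ^ c))) *
      ∫ p : S × G, tvDist (πStar p.1 p.2) (πθ p.1 p.2) ∂(d.prod ν))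
    -- (ii) absolute continuity of `d` w.r.t. `κ` with κ-essentially bounded density
    (hac : d ≪ κ)
    (hbound : ∀ᵐ s ∂κ, d.rnDeriv κ s ≤ ENNReal.ofReal C)
    -- (iii) `π*` is `φ`-common in `Π`
    (hcommon : ∫ p : S × I × G,
        tvDist (πStar p.1 p.2.2) (πD p.2.1 p.1 p.2.2) ∂(κ.prod (μI.prod ν)) ≤ φ)
    -- (iv) measurability of the total-variation maps
    (hm1 : Measurable fun p : S × G => tvDist (πStar p.1 p.2) (πθ p.1 p.2))
    (hm2 : Measurable fun p : S × I × G => tvDist (πStar p.1 p.2.2) (πD p.2.1 p.1 p.2.2))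
    (hm3 : Measurable fun p : S × I × G => tvDist (πD p.2.1 p.1 p.2.2) (πθ p.1 p.2.2)) :
    J πStar ≥ J πθ - (2 * Rmax / ((1 - γ) * (1 - γ ^ c))) * C * φ -
      (2 * Rmax / ((1 - γ) * (1 - γ ^ c))) * C *
        ∫ p : S × I × G,
          tvDist (πD p.2.1 p.1 p.2.2) (πθ p.1 p.2.2) ∂(κ.prod (μI.prod ν)) := by
  set L := 2 * Rmax / ((1 - γ) * (1 - γ ^ c))
  have hL : 0 ≤ L := div_nonneg (by positivity) (mul_nonneg (sub_nonneg.2 hγ1.le)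
    (sub_nonneg.2 (pow_le_one₀ hγ0.le hγ1.le)))
  have hTV := integral_tvDist_le_of_rnDeriv_le ν μI hC hac hbound hm1 hm2 hm3
  have hgap : J πθ - J πStar ≤ L * (C * (φ + ∫ p : S × I × G,
      tvDist (πD p.2.1 p.1 p.2.2) (πθ p.1 p.2.2) ∂(κ.prod (μI.prod ν)))) :=
    calc J πθ - J πStar ≤ |J πStar - J πθ| := by rw [abs_sub_comm]; exact le_abs_self _
      _ ≤ _ := hperf
      _ ≤ _ := mul_le_mul_of_nonneg_left hTV hL
      _ ≤ _ := by gcongr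
  linarith

/-- Minorization: under the hypotheses of the higher-level suboptimality bound,
`J(π*) ≥ J(π_θ) − λ_H·φ − λ_H·E_{s∼κ, i∼Π, g∼ν}[D_TV(π_{D,i}(·|s,g), π_θ(·|s,g))]`
with `λ_H = (2 R_max / ((1−γ)(1−γ^c))) · C`. -/
theorem higher_level_minorization
    {S T G I : Type*} [MeasurableSpace S] [MeasurableSpace T] [MeasurableSpace G]
    [MeasurableSpace I]
    (κ d : Measure S) (ν : Measure G) (μI : Measure I)
    [IsProbabilityMeasure κ] [IsProbabilityMeasure d] [IsProbabilityMeasure ν]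
    [IsProbabilityMeasure μI]
    (πD : I → S → G → Measure T) (πStar πθ : S → G → Measure T)
    (hπD : ∀ i s g, IsProbabilityMeasure (πD i s g))
    (hπStar : ∀ s g, IsProbabilityMeasure (πStar s g))
    (hπθ : ∀ s g, IsProbabilityMeasure (πθ s g))
    (J : (S → G → Measure T) → ℝ)
    (Rmax γ φ C : ℝ) (c : ℕ)
    (hR : 0 ≤ Rmax) (hγ0 : 0 < γ) (hγ1 : γ < 1) (hc : 1 ≤ c)
    (hφ : 0 ≤ φ) (hC : 0 ≤ C)
    -- (i) performance-difference bound
    (hperf : |J πStar - J πθ| ≤ (2 * Rmax / ((1 - γ) * (1 - γ ^ c))) *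
      ∫ p : S × G, tvDist (πStar p.1 p.2) (πθ p.1 p.2) ∂(d.prod ν))
    -- (ii) absolute continuity of `d` w.r.t. `κ` with κ-essentially bounded density
    (hac : d ≪ κ)
    (hbound : ∀ᵐ s ∂κ, d.rnDeriv κ s ≤ ENNReal.ofReal C)
    -- (iii) `π*` is `φ`-common in `Π`
    (hcommon : ∫ p : S × I × G,
        tvDist (πStar p.1 p.2.2) (πD p.2.1 p.1 p.2.2) ∂(κ.prod (μI.prod ν)) ≤ φ)
    -- (iv) measurability of the total-variation maps
    (hm1 : Measurable fun p : S × G => tvDist (πStar p.1 p.2) (πθ p.1 p.2))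
    (hm2 : Measurable fun p : S × I × G => tvDist (πStar p.1 p.2.2) (πD p.2.1 p.1 p.2.2))
    (hm3 : Measurable fun p : S × I × G => tvDist (πD p.2.1 p.1 p.2.2) (πθ p.1 p.2.2)) :
    J πStar ≥ J πθ - (2 * Rmax / ((1 - γ) * (1 - γ ^ c))) * C * φ -
      (2 * Rmax / ((1 - γ) * (1 - γ ^ c))) * C *
        ∫ p : S × I × G,
          tvDist (πD p.2.1 p.1 p.2.2) (πθ p.1 p.2.2) ∂(κ.prod (μI.prod ν)) :=
  higher_level_minorization_general κ d ν μI πD πStar πθ hπD hπStar hπθ J Rmax γ φ C c hR hγ0 hγ1 hC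
    hperf hac hbound hcommon hm1 hm2 hm3
end
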